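/- arXiv:2511.06343 — 3 statements merged into one kernel-verified Lean document; each statement's English description precedes it below -/
import Mathlib

section
/- Let d ≥ 3 and m1, m2 > 1. Suppose U ∈ L¹ ∩ L^{m1}(ℝ^d) and V ∈ L¹ ∩ L^{m2}(ℝ^d) are nonnegative and satisfy the stationary Euler–Lagrange equations. Then the free energy of the pair equals F(U,V) = ((m1 + m2 − m1·m2)/((m1−1)·m2)) · ∫_{ℝ^d} U^{m1} dx. -/
open MeasureTheory Real

noncomputable section

abbrev E (d : ℕ) := EuclideanSpace ℝ (Fin d)

/-- The double integral `∬ u(x) v(y) / |x-y|^(d-2) dx dy`. -/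
def hInt (d : ℕ) (u v : E d → ℝ) : ℝ :=
  ∫ x, ∫ y, u x * v y / ‖x - y‖ ^ ((d : ℝ) - 2)

/-- `α_d = π^{d/2} / Γ(d/2+1)`. -/
def alphaD (d : ℕ) : ℝ := π ^ ((d : ℝ) / 2) / Gamma ((d : ℝ) / 2 + 1)

/-- `c_d = 1 / (d (d-2) α_d)`. -/
def cD (d : ℕ) : ℝ := 1 / (d * ((d : ℝ) - 2) * alphaD d)

/-- The pair `(U,V)` satisfies the stationary Euler–Lagrange equations. -/
def StationaryEL (d : ℕ) (m1 m2 : ℝ) (U V : E d → ℝ) : Prop :=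
  (∀ᵐ x ∂volume,
    (m1 / (m1 - 1)) * U x ^ (m1 - 1) = cD d * ∫ y, V y / ‖x - y‖ ^ ((d : ℝ) - 2)) ∧
  (∀ᵐ x ∂volume,
    (m2 / (m2 - 1)) * V x ^ (m2 - 1) = cD d * ∫ y, U y / ‖x - y‖ ^ ((d : ℝ) - 2))

/-- The free energy `F(u,v)`. -/
def freeEnergy (d : ℕ) (m1 m2 : ℝ) (u v : E d → ℝ) : ℝ :=
  (1 / (m1 - 1)) * (∫ x, u x ^ m1) + (1 / (m2 - 1)) * (∫ x, v x ^ m2)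
    - cD d * hInt d u v

namespace Stmt6Aux

open Metric Set

/-- The kernel `z ↦ 1/‖z‖^(d-2)` as an `ℝ≥0∞`-valued function. -/
def ker (d : ℕ) (z : E d) : ENNReal := ENNReal.ofReal (1 / ‖z‖ ^ ((d : ℝ) - 2))

lemma ker_meas (d : ℕ) : Measurable (ker d) := by unfold ker; fun_prop

lemma nontrivial_E {d : ℕ} (hd : 3 ≤ d) : Nontrivial (E d) := by
  have : NeZero d := ⟨by omega⟩
  infer_instance

lemma cast_sub_two {d : ℕ} (hd : 3 ≤ d) : ((d : ℝ) - 2) = ((d - 2 : ℕ) : ℝ) := by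
  have : (2 : ℕ) ≤ d := by omega
  push_cast [Nat.cast_sub this]
  ring

lemma rpow_sub_two {d : ℕ} (hd : 3 ≤ d) {a : ℝ} (ha : 0 ≤ a) :
    a ^ ((d : ℝ) - 2) = a ^ (d - 2 : ℕ) := by
  rw [cast_sub_two hd, Real.rpow_natCast]

lemma pow_ident (d m n : ℕ) (hdm : d = m + 2) :
    ((2:ℝ) ^ (n+1)) ^ m * 4 ^ n = 2 ^ m * ((2:ℝ) ^ n) ^ d := by
  rw [← pow_mul, show (4:ℝ) = 2^2 by norm_num, ← pow_mul, ← pow_mul, ← pow_add, ← pow_add]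
  congr 1
  subst hdm
  ring

lemma geom_eq (d m n : ℕ) (hdm : d = m + 2) {r : ℝ} (hr : 0 < r) :
    ((2:ℝ) ^ (n+1) / r) ^ m * (r / 2 ^ n) ^ d = (2 ^ m * r ^ 2) * (1/4 : ℝ) ^ n := by
  have h2 : ((2:ℝ) ^ n) ≠ 0 := by positivity
  have h4 : ((4:ℝ) ^ n) ≠ 0 := by positivity
  have hrd : r ^ d = r ^ m * r ^ 2 := by rw [hdm, pow_add]
  rw [div_pow, div_pow, hrd, one_div_pow]
  field_simp
  linear_combination pow_ident d m n hdm

lemma ker_finite {d : ℕ} (hd : 3 ≤ d) {r : ℝ} (hr : 0 < r) :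
    ∫⁻ z in ball (0 : E d) r, ker d z < ⊤ := by
  haveI : Nontrivial (E d) := nontrivial_E hd
  set m : ℕ := d - 2 with hm
  have hdm : d = m + 2 := by omega
  set S : ℕ → Set (E d) := fun n => ball 0 (r / 2 ^ n) \ ball 0 (r / 2 ^ (n+1)) with hS
  have cover : ball (0 : E d) r ⊆ {0} ∪ ⋃ n, S n := by
    intro z hz
    rcases eq_or_ne z 0 with h0 | h0
    · exact Or.inl (by simp [h0])
    · have hzn : 0 < ‖z‖ := norm_pos_iff.mpr h0
      have hex : ∃ n : ℕ, r / 2 ^ (n+1) ≤ ‖z‖ := by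
        obtain ⟨n, hn⟩ := pow_unbounded_of_one_lt (r / ‖z‖) (one_lt_two (α := ℝ))
        refine ⟨n, ?_⟩
        have h1 : r / 2 ^ n < ‖z‖ := by
          rw [div_lt_iff₀ (by positivity)]
          calc r = (r / ‖z‖) * ‖z‖ := by field_simp
          _ < 2 ^ n * ‖z‖ := by exact mul_lt_mul_of_pos_right hn hzn
          _ = ‖z‖ * 2 ^ n := mul_comm _ _
        refine le_trans ?_ h1.le
        apply div_le_div_of_nonneg_left hr.le (by positivity)
        exact pow_le_pow_right₀ one_le_two (Nat.le_succ n)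
      right
      refine mem_iUnion.mpr ⟨Nat.find hex, ?_⟩
      have hlow : r / 2 ^ (Nat.find hex + 1) ≤ ‖z‖ := Nat.find_spec hex
      have hup : ‖z‖ < r / 2 ^ (Nat.find hex) := by
        rcases Nat.eq_zero_or_pos (Nat.find hex) with h | h
        · rw [h]; simpa using mem_ball_zero_iff.mp hz
        · obtain ⟨k, hk⟩ := Nat.exists_eq_succ_of_ne_zero h.ne'
          have hmin := Nat.find_min hex (by omega : k < Nat.find hex)
          rw [hk]
          exact lt_of_not_ge hmin
      exact ⟨mem_ball_zero_iff.mpr hup, fun h => absurd (mem_ball_zero_iff.mp h) (not_lt.mpr hlow)⟩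
  set B1 : ENNReal := volume (ball (0 : E d) 1) with hB1
  have hB1top : B1 < ⊤ := measure_ball_lt_top
  have shell_bound : ∀ n : ℕ, ∫⁻ z in S n, ker d z ≤
      (ENNReal.ofReal (2 ^ m * r ^ 2) * B1) * (ENNReal.ofReal (1/4 : ℝ)) ^ n := by
    intro n
    have hrad : (0:ℝ) < r / 2 ^ (n+1) := by positivity
    have hbd : ∀ z ∈ S n, ker d z ≤ ENNReal.ofReal (((2:ℝ) ^ (n+1) / r) ^ m) := by
      intro z hz
      have hz1 : r / 2 ^ (n+1) ≤ ‖z‖ := by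
        by_contra h
        exact hz.2 (mem_ball_zero_iff.mpr (lt_of_not_ge h))
      have hzpos : (0:ℝ) < ‖z‖ := lt_of_lt_of_le hrad hz1
      simp only [ker]
      apply ENNReal.ofReal_le_ofReal
      rw [rpow_sub_two hd (norm_nonneg z), ← hm]
      rw [show ((2:ℝ) ^ (n+1) / r) ^ m = 1 / (r / 2 ^ (n+1)) ^ m by
        rw [one_div, ← inv_pow, inv_div]]
      apply one_div_le_one_div_of_le (by positivity)
      exact pow_le_pow_left₀ hrad.le hz1 m
    calc ∫⁻ z in S n, ker d z
        ≤ ∫⁻ _ in S n, ENNReal.ofReal (((2:ℝ) ^ (n+1) / r) ^ m) := by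
          apply setLIntegral_mono measurable_const hbd
      _ = ENNReal.ofReal (((2:ℝ) ^ (n+1) / r) ^ m) * volume (S n) := setLIntegral_const _ _
      _ ≤ ENNReal.ofReal (((2:ℝ) ^ (n+1) / r) ^ m) * volume (ball (0 : E d) (r / 2 ^ n)) := by
          exact mul_le_mul_right (measure_mono diff_subset) _
      _ = ENNReal.ofReal (((2:ℝ) ^ (n+1) / r) ^ m) *
            (ENNReal.ofReal ((r / 2 ^ n) ^ Module.finrank ℝ (E d)) * B1) := by
          rw [Measure.addHaar_ball _ _ (by positivity)]
      _ = (ENNReal.ofReal (2 ^ m * r ^ 2) * B1) * (ENNReal.ofReal (1/4 : ℝ)) ^ n := by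
          rw [finrank_euclideanSpace, Fintype.card_fin, ← mul_assoc,
            ← ENNReal.ofReal_mul (by positivity), geom_eq d m n hdm hr,
            ← ENNReal.ofReal_pow (by norm_num), ENNReal.ofReal_mul (by positivity)]
          ring
  calc ∫⁻ z in ball (0 : E d) r, ker d z
      ≤ ∫⁻ z in ({0} ∪ ⋃ n, S n : Set (E d)), ker d z := lintegral_mono_set cover
    _ ≤ (∫⁻ z in ({0} : Set (E d)), ker d z) + ∫⁻ z in ⋃ n, S n, ker d z :=
        lintegral_union_le _ _ _
    _ ≤ 0 + ∑' n, ∫⁻ z in S n, ker d z := by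
        gcongr
        · rw [setLIntegral_measure_zero]; exact measure_singleton 0
        · exact lintegral_iUnion_le _ _
    _ ≤ ∑' n, (ENNReal.ofReal (2 ^ m * r ^ 2) * B1) * (ENNReal.ofReal (1/4 : ℝ)) ^ n := by
        rw [zero_add]; exact ENNReal.tsum_le_tsum shell_bound
    _ = (ENNReal.ofReal (2 ^ m * r ^ 2) * B1) * (1 - ENNReal.ofReal (1/4 : ℝ))⁻¹ := by
        rw [ENNReal.tsum_mul_left, ENNReal.tsum_geometric]
    _ < ⊤ := by
        apply ENNReal.mul_lt_top (ENNReal.mul_lt_top ENNReal.ofReal_lt_top hB1top)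
        refine ENNReal.inv_lt_top.mpr ?_
        rw [tsub_pos_iff_lt]
        exact ENNReal.ofReal_lt_one.mpr (by norm_num)



lemma phi_meas {d : ℕ} {V : E d → ℝ} (hV : Measurable V) :
    Measurable fun x : E d => ∫⁻ y, ENNReal.ofReal (V y) * ker d (x - y) := by
  apply Measurable.lintegral_prod_right' (f := fun p : E d × E d =>
    ENNReal.ofReal (V p.2) * ker d (p.1 - p.2))
  exact ((hV.comp measurable_snd).ennreal_ofReal).mul
    ((ker_meas d).comp (measurable_fst.sub measurable_snd))

lemma inner_bound {d : ℕ} (hd : 3 ≤ d) {R : ℝ} (hR : 0 < R) (y : E d) :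
    ∫⁻ x in ball (0 : E d) R, ker d (x - y) ≤
      (∫⁻ z in ball (0 : E d) (2*R), ker d z) +
        ENNReal.ofReal (1 / (2*R) ^ ((d:ℝ) - 2)) * volume (ball (0 : E d) R) := by
  have hs : (0:ℝ) ≤ (d:ℝ) - 2 := by
    have : (3:ℝ) ≤ (d:ℝ) := by exact_mod_cast hd
    linarith
  have hpt : ∀ x : E d, ker d (x - y) ≤
      (ball (0 : E d) (2*R)).indicator (ker d) (x - y) +
        ENNReal.ofReal (1 / (2*R) ^ ((d:ℝ) - 2)) := by
    intro x
    by_cases h : x - y ∈ ball (0 : E d) (2*R)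
    · rw [indicator_of_mem h]; exact le_self_add
    · rw [indicator_of_notMem h, zero_add]
      have hge : 2*R ≤ ‖x - y‖ := le_of_not_gt (fun hc => h (mem_ball_zero_iff.mpr hc))
      simp only [ker]
      apply ENNReal.ofReal_le_ofReal
      apply one_div_le_one_div_of_le (by positivity)
      exact Real.rpow_le_rpow (by positivity) hge hs
  calc ∫⁻ x in ball (0 : E d) R, ker d (x - y)
      ≤ ∫⁻ x in ball (0 : E d) R, ((ball (0 : E d) (2*R)).indicator (ker d) (x - y) +
          ENNReal.ofReal (1 / (2*R) ^ ((d:ℝ) - 2))) := lintegral_mono hpt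
    _ = (∫⁻ x in ball (0 : E d) R, (ball (0 : E d) (2*R)).indicator (ker d) (x - y)) +
          ENNReal.ofReal (1 / (2*R) ^ ((d:ℝ) - 2)) * volume (ball (0 : E d) R) := by
        rw [lintegral_add_right _ measurable_const, setLIntegral_const]
    _ ≤ (∫⁻ x, (ball (0 : E d) (2*R)).indicator (ker d) (x - y)) +
          ENNReal.ofReal (1 / (2*R) ^ ((d:ℝ) - 2)) * volume (ball (0 : E d) R) := by
        gcongr
        exact Measure.restrict_le_self
    _ = (∫⁻ z in ball (0 : E d) (2*R), ker d z) +
          ENNReal.ofReal (1 / (2*R) ^ ((d:ℝ) - 2)) * volume (ball (0 : E d) R) := by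
        rw [lintegral_sub_right_eq_self
          (fun z => (ball (0 : E d) (2*R)).indicator (ker d) z) y,
          lintegral_indicator measurableSet_ball]

lemma phi_finite {d : ℕ} (hd : 3 ≤ d) {V : E d → ℝ} (hV : Measurable V)
    (hV0 : ∀ y, 0 ≤ V y) (hV1 : Integrable V) :
    ∀ᵐ x : E d ∂volume, ∫⁻ y, ENNReal.ofReal (V y / ‖x - y‖ ^ ((d:ℝ) - 2)) < ⊤ := by
  have key : ∀ x y : E d, ENNReal.ofReal (V y / ‖x - y‖ ^ ((d:ℝ) - 2)) =
      ENNReal.ofReal (V y) * ker d (x - y) := by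
    intro x y
    rw [ker, ← ENNReal.ofReal_mul (hV0 y), mul_one_div]
  simp only [key]
  have H : ∀ n : ℕ, ∫⁻ x in ball (0 : E d) ((n:ℝ)+1),
      (∫⁻ y, ENNReal.ofReal (V y) * ker d (x - y)) < ⊤ := by
    intro n
    set R : ℝ := (n:ℝ)+1 with hRdef
    have hR : (0:ℝ) < R := by positivity
    set C : ENNReal := (∫⁻ z in ball (0 : E d) (2*R), ker d z) +
        ENNReal.ofReal (1 / (2*R) ^ ((d:ℝ) - 2)) * volume (ball (0 : E d) R) with hC
    have hCtop : C < ⊤ := by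
      apply ENNReal.add_lt_top.mpr
      constructor
      · exact ker_finite hd (by positivity)
      · exact ENNReal.mul_lt_top ENNReal.ofReal_lt_top measure_ball_lt_top
    calc ∫⁻ x in ball (0 : E d) R, (∫⁻ y, ENNReal.ofReal (V y) * ker d (x - y))
        = ∫⁻ y, ∫⁻ x in ball (0 : E d) R, ENNReal.ofReal (V y) * ker d (x - y) := by
          apply lintegral_lintegral_swap
          exact (((hV.comp measurable_snd).ennreal_ofReal).mul
            ((ker_meas d).comp (measurable_fst.sub measurable_snd))).aemeasurable
      _ = ∫⁻ y, ENNReal.ofReal (V y) * ∫⁻ x in ball (0 : E d) R, ker d (x - y) := by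
          refine lintegral_congr fun y => ?_
          exact lintegral_const_mul' _ _ ENNReal.ofReal_ne_top
      _ ≤ ∫⁻ y, ENNReal.ofReal (V y) * C := by
          refine lintegral_mono fun y => ?_
          exact mul_le_mul_right (inner_bound hd hR y) _
      _ = C * ∫⁻ y, ENNReal.ofReal (V y) := by
          simp_rw [mul_comm (ENNReal.ofReal (V _)) C]
          exact lintegral_const_mul' _ _ hCtop.ne
      _ < ⊤ := ENNReal.mul_lt_top hCtop hV1.lintegral_lt_top
  have H2 : ∀ᵐ x : E d ∂volume, ∀ n : ℕ, x ∈ ball (0 : E d) ((n:ℝ)+1) →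
      (∫⁻ y, ENNReal.ofReal (V y) * ker d (x - y)) < ⊤ := by
    rw [ae_all_iff]
    intro n
    exact (ae_restrict_iff' measurableSet_ball).mp (ae_lt_top (phi_meas hV) (H n).ne)
  filter_upwards [H2] with x hx
  exact hx ⌈‖x‖⌉₊ (mem_ball_zero_iff.mpr (lt_of_le_of_lt (Nat.le_ceil _) (lt_add_one _)))


lemma mul_rpow_sub_one {m a : ℝ} (hm : 1 < m) (ha : 0 ≤ a) :
    a * a ^ (m - 1) = a ^ m := by
  rcases ha.eq_or_lt with h | h
  · simp [← h, Real.zero_rpow (show m ≠ 0 by intro hc; rw [hc] at hm; linarith)]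
  · rw [show m = 1 + (m - 1) by ring, Real.rpow_add h, Real.rpow_one]
    ring_nf

lemma prod_integrable {d : ℕ} (hd : 3 ≤ d) {W1 W2 : E d → ℝ} {c m : ℝ}
    (hW1 : Measurable W1) (hW2 : Measurable W2)
    (h10 : ∀ x, 0 ≤ W1 x) (h20 : ∀ y, 0 ≤ W2 y)
    (hW2int : Integrable W2) (hWm : Integrable (fun x => W1 x ^ m))
    (hm : 1 < m)
    (hEL : ∀ᵐ x : E d ∂volume,
      (∫ y, W2 y / ‖x - y‖ ^ ((d:ℝ) - 2)) = c * W1 x ^ (m - 1)) :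
    Integrable (fun p : E d × E d => W1 p.1 * W2 p.2 / ‖p.1 - p.2‖ ^ ((d:ℝ) - 2))
      (volume.prod volume) := by
  have meas : Measurable (fun p : E d × E d =>
      W1 p.1 * W2 p.2 / ‖p.1 - p.2‖ ^ ((d:ℝ) - 2)) := by fun_prop
  have nonneg : ∀ p : E d × E d,
      0 ≤ W1 p.1 * W2 p.2 / ‖p.1 - p.2‖ ^ ((d:ℝ) - 2) := fun p =>
    div_nonneg (mul_nonneg (h10 _) (h20 _)) (Real.rpow_nonneg (norm_nonneg _) _)
  refine ⟨meas.aestronglyMeasurable, ?_⟩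
  rw [hasFiniteIntegral_iff_ofReal (Filter.Eventually.of_forall nonneg)]
  rw [lintegral_prod _ meas.ennreal_ofReal.aemeasurable]
  have hae : ∀ᵐ x : E d ∂volume,
      (∫⁻ y, ENNReal.ofReal (W1 x * W2 y / ‖x - y‖ ^ ((d:ℝ) - 2))) =
        ENNReal.ofReal (c * W1 x ^ m) := by
    filter_upwards [hEL, phi_finite hd hW2 h20 hW2int] with x hELx hfin
    have hint : Integrable (fun y => W2 y / ‖x - y‖ ^ ((d:ℝ) - 2)) := by
      refine ⟨(by fun_prop : Measurable fun y =>
        W2 y / ‖x - y‖ ^ ((d:ℝ) - 2)).aestronglyMeasurable, ?_⟩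
      rw [hasFiniteIntegral_iff_ofReal (Filter.Eventually.of_forall fun y =>
        div_nonneg (h20 y) (Real.rpow_nonneg (norm_nonneg _) _))]
      exact hfin
    calc (∫⁻ y, ENNReal.ofReal (W1 x * W2 y / ‖x - y‖ ^ ((d:ℝ) - 2)))
        = ∫⁻ y, ENNReal.ofReal (W1 x) *
            ENNReal.ofReal (W2 y / ‖x - y‖ ^ ((d:ℝ) - 2)) := by
          refine lintegral_congr fun y => ?_
          rw [mul_div_assoc, ENNReal.ofReal_mul (h10 x)]
      _ = ENNReal.ofReal (W1 x) * ∫⁻ y, ENNReal.ofReal (W2 y / ‖x - y‖ ^ ((d:ℝ) - 2)) :=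
          lintegral_const_mul' _ _ ENNReal.ofReal_ne_top
      _ = ENNReal.ofReal (W1 x) * ENNReal.ofReal (∫ y, W2 y / ‖x - y‖ ^ ((d:ℝ) - 2)) := by
          rw [ofReal_integral_eq_lintegral_ofReal hint (Filter.Eventually.of_forall fun y =>
            div_nonneg (h20 y) (Real.rpow_nonneg (norm_nonneg _) _))]
      _ = ENNReal.ofReal (c * W1 x ^ m) := by
          rw [hELx, ← ENNReal.ofReal_mul (h10 x)]
          congr 1
          rw [← mul_assoc, mul_comm (W1 x) c, mul_assoc, mul_rpow_sub_one hm (h10 x)]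
  rw [lintegral_congr_ae hae]
  exact (hWm.const_mul c).lintegral_lt_top

lemma cD_pos {d : ℕ} (hd : 3 ≤ d) : 0 < cD d := by
  have h3 : (3:ℝ) ≤ (d:ℝ) := by exact_mod_cast hd
  have hα : 0 < alphaD d := div_pos (Real.rpow_pos_of_pos Real.pi_pos _)
    (Real.Gamma_pos_of_pos (by positivity))
  exact div_pos one_pos (mul_pos (mul_pos (by linarith) (by linarith)) hα)

lemma core (d : ℕ) (hd : 3 ≤ d) (m1 m2 : ℝ) (hm1 : 1 < m1) (hm2 : 1 < m2)
    (U V : E d → ℝ) (hUmeas : Measurable U) (hVmeas : Measurable V)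
    (hU0 : ∀ x, 0 ≤ U x) (hV0 : ∀ x, 0 ≤ V x)
    (hU1 : Integrable U) (hUm : Integrable (fun x => U x ^ m1))
    (hV1 : Integrable V) (hVm : Integrable (fun x => V x ^ m2))
    (hEL : StationaryEL d m1 m2 U V) :
    freeEnergy d m1 m2 U V =
      ((m1 + m2 - m1 * m2) / ((m1 - 1) * m2)) * ∫ x, U x ^ m1 := by
  have hcD := cD_pos hd
  have hcD' : cD d ≠ 0 := hcD.ne'
  have hm1' : m1 - 1 ≠ 0 := by linarith
  have hm2' : m2 - 1 ≠ 0 := by linarith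
  have hm2'' : m2 ≠ 0 := by linarith
  set c1 : ℝ := m1 / ((m1 - 1) * cD d) with hc1
  set c2 : ℝ := m2 / ((m2 - 1) * cD d) with hc2
  have hc1pos : 0 < c1 := div_pos (by linarith) (mul_pos (by linarith) hcD)
  have hc2pos : 0 < c2 := div_pos (by linarith) (mul_pos (by linarith) hcD)
  have hEL1' : ∀ᵐ x : E d ∂volume,
      (∫ y, V y / ‖x - y‖ ^ ((d:ℝ) - 2)) = c1 * U x ^ (m1 - 1) := by
    filter_upwards [hEL.1] with x hx
    rw [hc1]
    field_simp
    field_simp at hx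
    linarith [hx]
  have hEL2' : ∀ᵐ x : E d ∂volume,
      (∫ y, U y / ‖x - y‖ ^ ((d:ℝ) - 2)) = c2 * V x ^ (m2 - 1) := by
    filter_upwards [hEL.2] with x hx
    rw [hc2]
    field_simp
    field_simp at hx
    linarith [hx]
  have hIntUV := prod_integrable hd hUmeas hVmeas hU0 hV0 hV1 hUm hm1 hEL1'
  have hIntVU := prod_integrable hd hVmeas hUmeas hV0 hU0 hU1 hVm hm2 hEL2'
  have h1 : hInt d U V = c1 * ∫ x, U x ^ m1 := by
    have e1 : (fun x => ∫ y, U x * V y / ‖x - y‖ ^ ((d:ℝ) - 2)) =ᵐ[volume]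
        (fun x => c1 * U x ^ m1) := by
      filter_upwards [hEL1'] with x hx
      calc ∫ y, U x * V y / ‖x - y‖ ^ ((d:ℝ) - 2)
          = ∫ y, U x * (V y / ‖x - y‖ ^ ((d:ℝ) - 2)) := by simp_rw [mul_div_assoc]
        _ = U x * ∫ y, V y / ‖x - y‖ ^ ((d:ℝ) - 2) := integral_const_mul _ _
        _ = U x * (c1 * U x ^ (m1 - 1)) := by rw [hx]
        _ = c1 * U x ^ m1 := by
            rw [← mul_assoc, mul_comm (U x) c1, mul_assoc, mul_rpow_sub_one hm1 (hU0 x)]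
    rw [hInt, integral_congr_ae e1, integral_const_mul]
  have h2 : hInt d V U = c2 * ∫ x, V x ^ m2 := by
    have e2 : (fun x => ∫ y, V x * U y / ‖x - y‖ ^ ((d:ℝ) - 2)) =ᵐ[volume]
        (fun x => c2 * V x ^ m2) := by
      filter_upwards [hEL2'] with x hx
      calc ∫ y, V x * U y / ‖x - y‖ ^ ((d:ℝ) - 2)
          = ∫ y, V x * (U y / ‖x - y‖ ^ ((d:ℝ) - 2)) := by simp_rw [mul_div_assoc]
        _ = V x * ∫ y, U y / ‖x - y‖ ^ ((d:ℝ) - 2) := integral_const_mul _ _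
        _ = V x * (c2 * V x ^ (m2 - 1)) := by rw [hx]
        _ = c2 * V x ^ m2 := by
            rw [← mul_assoc, mul_comm (V x) c2, mul_assoc, mul_rpow_sub_one hm2 (hV0 x)]
    rw [hInt, integral_congr_ae e2, integral_const_mul]
  have h3 : hInt d V U = hInt d U V := by
    have hswap := integral_integral_swap
      (f := fun x y : E d => V x * U y / ‖x - y‖ ^ ((d:ℝ) - 2)) hIntVU
    rw [hInt, hswap, hInt]
    refine integral_congr_ae (Filter.Eventually.of_forall fun a => ?_)
    refine integral_congr_ae (Filter.Eventually.of_forall fun b => ?_)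
    simp only []
    rw [mul_comm (V b) (U a), norm_sub_rev]
  have hB : ∫ x, V x ^ m2 = c1 * (∫ x, U x ^ m1) / c2 := by
    have := h2.symm.trans (h3.trans h1)
    field_simp at this ⊢
    linarith [this]
  rw [freeEnergy, h1, hB, hc1, hc2]
  field_simp
  ring

end Stmt6Aux


theorem stmt_6 (d : ℕ) (hd : 3 ≤ d) (m1 m2 : ℝ) (hm1 : 1 < m1) (hm2 : 1 < m2)
    (U V : E d → ℝ) (hU0 : ∀ x, 0 ≤ U x) (hV0 : ∀ x, 0 ≤ V x)
    (hU1 : MemLp U 1 volume) (hUm : MemLp U (ENNReal.ofReal m1) volume)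
    (hV1 : MemLp V 1 volume) (hVm : MemLp V (ENNReal.ofReal m2) volume)
    (hEL : StationaryEL d m1 m2 U V) :
    freeEnergy d m1 m2 U V =
      ((m1 + m2 - m1 * m2) / ((m1 - 1) * m2)) * ∫ x, U x ^ m1 := by
  classical
  have hUae := hU1.aestronglyMeasurable
  have hVae := hV1.aestronglyMeasurable
  set U' : E d → ℝ := fun x => max (hUae.mk U x) 0 with hU'def
  set V' : E d → ℝ := fun x => max (hVae.mk V x) 0 with hV'def
  have hU'meas : Measurable U' :=
    (hUae.stronglyMeasurable_mk.measurable).max measurable_const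
  have hV'meas : Measurable V' :=
    (hVae.stronglyMeasurable_mk.measurable).max measurable_const
  have hUeq : U =ᵐ[volume] U' := by
    filter_upwards [hUae.ae_eq_mk] with x hx
    show U x = max (hUae.mk U x) 0
    rw [← hx, max_eq_left (hU0 x)]
  have hVeq : V =ᵐ[volume] V' := by
    filter_upwards [hVae.ae_eq_mk] with x hx
    show V x = max (hVae.mk V x) 0
    rw [← hx, max_eq_left (hV0 x)]
  have hU'0 : ∀ x, 0 ≤ U' x := fun x => le_max_right _ _
  have hV'0 : ∀ x, 0 ≤ V' x := fun x => le_max_right _ _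
  have hU'1 : Integrable U' := (memLp_one_iff_integrable.mp hU1).congr hUeq
  have hV'1 : Integrable V' := (memLp_one_iff_integrable.mp hV1).congr hVeq
  have hUmr : Integrable (fun x => U x ^ m1) := by
    have h := hUm.integrable_norm_rpow
      (by simp only [ne_eq, ENNReal.ofReal_eq_zero, not_le]; linarith) ENNReal.ofReal_ne_top
    rw [ENNReal.toReal_ofReal (by linarith : (0:ℝ) ≤ m1)] at h
    exact h.congr (Filter.Eventually.of_forall fun x => by
      show ‖U x‖ ^ m1 = U x ^ m1
      rw [Real.norm_of_nonneg (hU0 x)])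
  have hVmr : Integrable (fun x => V x ^ m2) := by
    have h := hVm.integrable_norm_rpow
      (by simp only [ne_eq, ENNReal.ofReal_eq_zero, not_le]; linarith) ENNReal.ofReal_ne_top
    rw [ENNReal.toReal_ofReal (by linarith : (0:ℝ) ≤ m2)] at h
    exact h.congr (Filter.Eventually.of_forall fun x => by
      show ‖V x‖ ^ m2 = V x ^ m2
      rw [Real.norm_of_nonneg (hV0 x)])
  have hU'm : Integrable (fun x => U' x ^ m1) :=
    hUmr.congr (hUeq.mono fun x hx => by simp only [hx])
  have hV'm : Integrable (fun x => V' x ^ m2) :=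
    hVmr.congr (hVeq.mono fun x hx => by simp only [hx])
  have hinnerV : ∀ x : E d, (∫ y, V y / ‖x - y‖ ^ ((d:ℝ) - 2)) =
      ∫ y, V' y / ‖x - y‖ ^ ((d:ℝ) - 2) :=
    fun x => integral_congr_ae (hVeq.mono fun y hy => by simp only [hy])
  have hinnerU : ∀ x : E d, (∫ y, U y / ‖x - y‖ ^ ((d:ℝ) - 2)) =
      ∫ y, U' y / ‖x - y‖ ^ ((d:ℝ) - 2) :=
    fun x => integral_congr_ae (hUeq.mono fun y hy => by simp only [hy])
  have hEL' : StationaryEL d m1 m2 U' V' := by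
    constructor
    · filter_upwards [hEL.1, hUeq] with x h1 hx
      rw [← hx, ← hinnerV x]
      exact h1
    · filter_upwards [hEL.2, hVeq] with x h1 hx
      rw [← hx, ← hinnerU x]
      exact h1
  have hcore := Stmt6Aux.core d hd m1 m2 hm1 hm2 U' V' hU'meas hV'meas hU'0 hV'0
    hU'1 hU'm hV'1 hV'm hEL'
  have hAeq : (∫ x, U x ^ m1) = ∫ x, U' x ^ m1 :=
    integral_congr_ae (hUeq.mono fun x hx => by simp only [hx])
  have hBeq : (∫ x, V x ^ m2) = ∫ x, V' x ^ m2 :=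
    integral_congr_ae (hVeq.mono fun x hx => by simp only [hx])
  have hHeq : hInt d U V = hInt d U' V' := by
    rw [hInt, hInt]
    calc ∫ x, ∫ y, U x * V y / ‖x - y‖ ^ ((d:ℝ) - 2)
        = ∫ x, ∫ y, U x * V' y / ‖x - y‖ ^ ((d:ℝ) - 2) := by
          refine integral_congr_ae (Filter.Eventually.of_forall fun x => ?_)
          exact integral_congr_ae (hVeq.mono fun y hy => by simp only [hy])
      _ = ∫ x, ∫ y, U' x * V' y / ‖x - y‖ ^ ((d:ℝ) - 2) := by
          refine integral_congr_ae (hUeq.mono fun x hx => ?_)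
          simp only [hx]
  have hFE : freeEnergy d m1 m2 U V = freeEnergy d m1 m2 U' V' := by
    rw [freeEnergy, freeEnergy, hAeq, hBeq, hHeq]
  rw [hFE, hcore, hAeq]
end
end

section
/- Let d ≥ 3 and m1, m2 > 1 with 1/m1 + 1/m2 = (d+2)/d. Let Ω₁, Ω₂ ⊆ ℝ^d be connected open sets, and let U, V : ℝ^d → [0,∞) be continuous with U ∈ L¹ ∩ L^{m1}(ℝ^d), V ∈ L¹ ∩ L^{m2}(ℝ^d), ∫U = M1 > 0, ∫V = M2 > 0, U > 0 on Ω₁ and U = 0 on ℝ^d∖Ω₁, V > 0 on Ω₂ and V = 0 on ℝ^d∖Ω₂. Assume the Riesz potentials x ↦ ∫_{ℝ^d} V(y)/|x−y|^{d−2} dy and x ↦ ∫_{ℝ^d} U(y)/|x−y|^{d−2} dy are finite and continuous on ℝ^d. Suppose there are constants C̄1, C̄2 ∈ ℝ such that (m1/(m1−1)) U(x)^{m1−1} − c_d ∫ V(y)/|x−y|^{d−2} dy = C̄1 for a.e. x ∈ Ω₁ and (m2/(m2−1)) V(x)^{m2−1} − c_d ∫ U(y)/|x−y|^{d−2} dy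 = C̄2 for a.e. x ∈ Ω₂, and that the Pohozaev identity holds: 2d ∫ U^{m1} dx + 2d ∫ V^{m2} dx = 2 c_d (d−2) ∬ U(x)V(y)/|x−y|^{d−2} dx dy. Then C̄1 = C̄2 = 0 and Ω₁ = Ω₂ = ℝ^d. -/
open MeasureTheory Real

noncomputable section

lemma cD_pos {d : ℕ} (hd : 3 ≤ d) : 0 < cD d := by
  have hd3 : (3:ℝ) ≤ (d:ℝ) := by exact_mod_cast hd
  have h1 : 0 < alphaD d := div_pos (rpow_pos_of_pos pi_pos _)
    (Gamma_pos_of_pos (by positivity))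
  have : 0 < (d:ℝ) * ((d:ℝ) - 2) * alphaD d := by
    apply mul_pos (mul_pos (by linarith) (by linarith)) h1
  exact div_pos one_pos this

lemma nontrivial_E {d : ℕ} (hd : 3 ≤ d) : Nontrivial (E d) := by
  have h : (EuclideanSpace.single ⟨0, by omega⟩ (1:ℝ) : E d) ≠ 0 := by
    intro h
    have := congrArg (fun v : E d => v ⟨0, by omega⟩) h
    simp [EuclideanSpace.single] at this
  exact ⟨_, _, h⟩

lemma aux_vol_univ {d : ℕ} (hd : 3 ≤ d) : (volume : Measure (E d)) Set.univ = ⊤ := by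
  haveI : Nonempty (Fin d) := ⟨⟨0, by omega⟩⟩
  haveI : Nontrivial (E d) := nontrivial_E hd
  exact MeasureTheory.measure_univ_of_isAddLeftInvariant volume

/-- a.e. statement on an open set upgrades to everywhere (for continuous functions). -/
lemma aux_eq_on_open {d : ℕ} {s : Set (E d)} (hs : IsOpen s) {f : E d → ℝ} (hf : Continuous f)
    {c : ℝ} (h : ∀ᵐ x ∂(volume : Measure (E d)), x ∈ s → f x = c) : ∀ x ∈ s, f x = c := by
  by_contra hcon
  push_neg at hcon
  obtain ⟨x₀, hx₀s, hx₀⟩ := hcon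
  set T : Set (E d) := s ∩ f ⁻¹' {c}ᶜ with hTdef
  have hTo : IsOpen T := hs.inter (isOpen_compl_singleton.preimage hf)
  have hTne : T.Nonempty := ⟨x₀, hx₀s, hx₀⟩
  have hT0 : volume T = 0 := by
    refine measure_mono_null ?_ (ae_iff.mp h)
    intro x hx
    simp only [Set.mem_setOf_eq]
    intro hP
    exact hx.2 (hP hx.1)
  exact absurd hT0 (hTo.measure_pos volume hTne).ne'

/-- Positivity of the Riesz potential. -/
lemma aux_riesz_pos {d : ℕ} (hd : 3 ≤ d) {g : E d → ℝ} (hg0 : ∀ y, 0 ≤ g y)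
    {Ω : Set (E d)} (hΩo : IsOpen Ω) (hΩne : Ω.Nonempty) (hgpos : ∀ y ∈ Ω, 0 < g y)
    (x : E d) (hint : Integrable (fun y => g y / ‖x - y‖ ^ ((d:ℝ) - 2)) volume) :
    0 < ∫ y, g y / ‖x - y‖ ^ ((d:ℝ) - 2) := by
  haveI := nontrivial_E hd
  haveI : NullSingletonClass (volume : Measure (E d)) := by infer_instance
  have hnn : 0 ≤ fun y : E d => g y / ‖x - y‖ ^ ((d:ℝ)-2) :=
    fun y => div_nonneg (hg0 y) (rpow_nonneg (norm_nonneg _) _)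
  rw [integral_pos_iff_support_of_nonneg hnn hint]
  have hsub : Ω \ {x} ⊆ Function.support fun y => g y / ‖x - y‖ ^ ((d:ℝ)-2) := by
    intro y hy
    have hyx : y ≠ x := hy.2
    have hxy : x - y ≠ 0 := sub_ne_zero.mpr (Ne.symm hyx)
    have h1 : 0 < ‖x - y‖ ^ ((d:ℝ)-2) := rpow_pos_of_pos (norm_pos_iff.mpr hxy) _
    exact ne_of_gt (div_pos (hgpos y hy.1) h1)
  calc (0:ENNReal) < volume (Ω \ {x}) := by
        rw [measure_diff_null (measure_singleton x)]
        exact hΩo.measure_pos volume hΩne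
    _ ≤ _ := measure_mono hsub

/-- the multiplier is nonpositive; and negative when the support is not everything. -/
lemma aux_C_nonpos {d : ℕ} (hd : 3 ≤ d) {m : ℝ} (hm : 1 < m)
    {Ω : Set (E d)} (hΩo : IsOpen Ω) (hΩne : Ω.Nonempty)
    {W : E d → ℝ} (hWc : Continuous W) (hW0 : ∀ x, 0 ≤ W x)
    (hW1 : Integrable W volume)
    (hWzero : ∀ x ∉ Ω, W x = 0)
    {R : E d → ℝ} (hRc : Continuous R) (hRpos : ∀ x, 0 < R x)
    {C : ℝ} (hEL : ∀ x ∈ Ω, (m / (m-1)) * W x ^ (m-1) - cD d * R x = C) :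
    C ≤ 0 ∧ (Ω ≠ Set.univ → C < 0) := by
  have hcd := cD_pos hd
  have hm1' : m - 1 ≠ 0 := by intro h; linarith [h]
  have hp : 0 < m / (m-1) := div_pos (by linarith) (by linarith)
  have hFc : Continuous fun x => (m/(m-1)) * W x ^ (m-1) - cD d * R x :=
    ((continuous_const.mul (hWc.rpow_const (fun x => Or.inr (by linarith)))).sub
      (continuous_const.mul hRc))
  have hlt : Ω ≠ Set.univ → C < 0 := by
    intro hne
    have hfr : (frontier Ω).Nonempty := by
      rw [Set.nonempty_iff_ne_empty]
      intro hfe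
      rcases isClopen_iff.mp (isClopen_iff_frontier_eq_empty.mpr hfe) with h | h
      · exact Set.nonempty_iff_ne_empty.mp hΩne h
      · exact hne h
    obtain ⟨x₀, hx₀⟩ := hfr
    have hx₀c : x₀ ∈ closure Ω := frontier_subset_closure hx₀
    have hx₀n : x₀ ∉ Ω := by
      rw [hΩo.frontier_eq] at hx₀; exact hx₀.2
    have hW0' : W x₀ = 0 := hWzero x₀ hx₀n
    have hcl : ∀ x ∈ closure Ω, (m/(m-1)) * W x ^ (m-1) - cD d * R x = C := by
      have hsub : closure Ω ⊆ {x | (m/(m-1)) * W x ^ (m-1) - cD d * R x = C} :=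
        closure_minimal (fun x hx => hEL x hx) (isClosed_eq hFc continuous_const)
      exact fun x hx => hsub hx
    have hx := hcl x₀ hx₀c
    rw [hW0', zero_rpow hm1', mul_zero, zero_sub] at hx
    rw [← hx]
    exact neg_lt_zero.mpr (mul_pos hcd (hRpos x₀))
  refine ⟨?_, hlt⟩
  by_cases huniv : Ω = Set.univ
  · by_contra hpos
    push_neg at hpos
    set ε := (C / (2 * (m/(m-1)))) ^ (m-1)⁻¹ with hεdef
    have hq : 0 < C / (2*(m/(m-1))) := div_pos hpos (by positivity)
    have hεpos : 0 < ε := rpow_pos_of_pos hq _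
    have hex : ∃ x, W x < ε := by
      by_contra hall
      push_neg at hall
      have hconst : Integrable (fun _ : E d => ε) volume :=
        hW1.mono' aestronglyMeasurable_const (Filter.Eventually.of_forall fun x => by
          rw [Real.norm_of_nonneg hεpos.le]; exact hall x)
      rcases integrable_const_iff.mp hconst with h | h
      · exact hεpos.ne' h
      · exact absurd (measure_lt_top volume Set.univ) (by rw [aux_vol_univ hd]; exact lt_irrefl _)
    obtain ⟨x, hx⟩ := hex
    have hELx := hEL x (huniv ▸ Set.mem_univ x)
    have h1 : C ≤ (m/(m-1)) * W x ^ (m-1) := by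
      have h0 : 0 ≤ cD d * R x := mul_nonneg hcd.le (hRpos x).le
      linarith
    have h2 : W x ^ (m-1) ≤ ε ^ (m-1) := rpow_le_rpow (hW0 x) hx.le (by linarith)
    have h3 : ε ^ (m-1) = C / (2*(m/(m-1))) := Real.rpow_inv_rpow hq.le hm1'
    have h4 : (m/(m-1)) * (C/(2*(m/(m-1)))) = C/2 := by
      field_simp
    have h5 : (m/(m-1)) * W x ^ (m-1) ≤ (m/(m-1)) * ε ^ (m-1) :=
      mul_le_mul_of_nonneg_left h2 hp.le
    rw [h3, h4] at h5
    linarith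
  · exact (hlt huniv).le

/-- Integrated Euler–Lagrange identity. -/
lemma aux_int_identity {d : ℕ} (hd : 3 ≤ d) {m : ℝ} (hm : 1 < m)
    {Ω : Set (E d)} {W R : E d → ℝ}
    (hW0 : ∀ x, 0 ≤ W x) (hWzero : ∀ x ∉ Ω, W x = 0)
    (hW1 : Integrable W volume) (hWm : Integrable (fun x => W x ^ m) volume)
    {C : ℝ} (hEL : ∀ x ∈ Ω, (m / (m-1)) * W x ^ (m-1) - cD d * R x = C) :
    Integrable (fun x => W x * R x) volume ∧
      cD d * ∫ x, W x * R x = (m/(m-1)) * (∫ x, W x ^ m) - C * ∫ x, W x := by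
  have hcd := cD_pos hd
  have key : ∀ x, cD d * (W x * R x) = (m/(m-1)) * W x ^ m - C * W x := by
    intro x
    by_cases hx : x ∈ Ω
    · have h := hEL x hx
      have hW : W x ^ m = W x * W x ^ (m-1) := by
        rcases eq_or_lt_of_le (hW0 x) with h0 | h0
        · rw [← h0, zero_rpow (by linarith), zero_rpow (by linarith), zero_mul]
        · rw [show m = 1 + (m-1) by ring, rpow_add h0, rpow_one]
          ring_nf
      linear_combination (-(W x)) * h + (-(m/(m-1))) * hW
    · have h0 : W x = 0 := hWzero x hx
      simp [h0, zero_rpow (show m ≠ 0 by linarith)]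
  have hInt2 : Integrable (fun x => (m/(m-1)) * W x ^ m - C * W x) volume :=
    (hWm.const_mul _).sub (hW1.const_mul C)
  have hfeq : (fun x => cD d * (W x * R x)) = fun x => (m/(m-1)) * W x ^ m - C * W x :=
    funext key
  have hInt1 : Integrable (fun x => cD d * (W x * R x)) volume := by
    rw [hfeq]; exact hInt2
  have hIntWR : Integrable (fun x => W x * R x) volume := by
    have h2 := hInt1.const_mul (cD d)⁻¹
    have : (fun x => (cD d)⁻¹ * (cD d * (W x * R x))) = fun x => W x * R x := by
      funext x
      rw [← mul_assoc, inv_mul_cancel₀ hcd.ne', one_mul]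
    rwa [this] at h2
  refine ⟨hIntWR, ?_⟩
  calc cD d * ∫ x, W x * R x = ∫ x, cD d * (W x * R x) := (integral_const_mul _ _).symm
    _ = ∫ x, ((m/(m-1)) * W x ^ m - C * W x) := by rw [hfeq]
    _ = (m/(m-1)) * (∫ x, W x ^ m) - C * ∫ x, W x := by
        rw [integral_sub (hWm.const_mul _) (hW1.const_mul C), integral_const_mul,
          integral_const_mul]

/-- Fubini swap for the interaction integral. -/
lemma aux_swap {d : ℕ} {U V : E d → ℝ}
    (hUc : Continuous U) (hVc : Continuous V) (hU0 : ∀ x, 0 ≤ U x) (hV0 : ∀ y, 0 ≤ V y)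
    (hRVint : ∀ x : E d, Integrable (fun y => V y / ‖x - y‖ ^ ((d:ℝ) - 2)) volume)
    (hIWR : Integrable (fun x => U x * ∫ y, V y / ‖x - y‖ ^ ((d:ℝ) - 2)) volume) :
    (∫ x, ∫ y, U x * V y / ‖x - y‖ ^ ((d:ℝ) - 2))
      = ∫ x, V x * ∫ y, U y / ‖x - y‖ ^ ((d:ℝ) - 2) := by
  have hnn : ∀ x y : E d, 0 ≤ U x * V y / ‖x - y‖ ^ ((d:ℝ)-2) :=
    fun x y => div_nonneg (mul_nonneg (hU0 x) (hV0 y)) (rpow_nonneg (norm_nonneg _) _)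
  have hfm : AEStronglyMeasurable
      (Function.uncurry fun x y => U x * V y / ‖x - y‖ ^ ((d:ℝ) - 2))
      ((volume : Measure (E d)).prod volume) := by
    apply Measurable.aestronglyMeasurable
    apply Measurable.div
    · exact (hUc.measurable.comp measurable_fst).mul (hVc.measurable.comp measurable_snd)
    · fun_prop
  have hint : Integrable (Function.uncurry fun x y => U x * V y / ‖x - y‖ ^ ((d:ℝ)-2))
      ((volume : Measure (E d)).prod volume) := by
    rw [integrable_prod_iff hfm]
    constructor
    · refine Filter.Eventually.of_forall fun x => ?_
      simp only [Function.uncurry_apply_pair]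
      have heq : (fun y => U x * V y / ‖x - y‖ ^ ((d:ℝ)-2))
          = fun y => U x * (V y / ‖x - y‖ ^ ((d:ℝ)-2)) := funext fun y => mul_div_assoc _ _ _
      rw [heq]
      exact (hRVint x).const_mul (U x)
    · apply Integrable.congr hIWR (Filter.Eventually.of_forall fun x => ?_)
      simp only [Function.uncurry_apply_pair]
      rw [← integral_const_mul]
      congr 1
      funext y
      rw [Real.norm_of_nonneg (hnn x y), mul_div_assoc]
  have hs := integral_integral_swap hint
  rw [hs]
  congr 1
  funext y
  rw [← integral_const_mul]
  congr 1
  funext x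
  rw [norm_sub_rev x y]
  ring

theorem stmt_9 (d : ℕ) (hd : 3 ≤ d) (m1 m2 : ℝ) (hm1 : 1 < m1) (hm2 : 1 < m2)
    (hcrit : 1 / m1 + 1 / m2 = ((d : ℝ) + 2) / d)
    (Ω₁ Ω₂ : Set (E d)) (hΩ₁o : IsOpen Ω₁) (hΩ₂o : IsOpen Ω₂)
    (hΩ₁c : IsConnected Ω₁) (hΩ₂c : IsConnected Ω₂)
    (U V : E d → ℝ) (hUc : Continuous U) (hVc : Continuous V)
    (hU0 : ∀ x, 0 ≤ U x) (hV0 : ∀ x, 0 ≤ V x)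
    (hU1 : MemLp U 1 volume) (hUm : MemLp U (ENNReal.ofReal m1) volume)
    (hV1 : MemLp V 1 volume) (hVm : MemLp V (ENNReal.ofReal m2) volume)
    (M1 M2 : ℝ) (hM1 : (∫ x, U x) = M1) (hM2 : (∫ x, V x) = M2)
    (hM1pos : 0 < M1) (hM2pos : 0 < M2)
    (hUpos : ∀ x ∈ Ω₁, 0 < U x) (hUzero : ∀ x ∉ Ω₁, U x = 0)
    (hVpos : ∀ x ∈ Ω₂, 0 < V x) (hVzero : ∀ x ∉ Ω₂, V x = 0)
    (hRVint : ∀ x : E d, Integrable (fun y => V y / ‖x - y‖ ^ ((d : ℝ) - 2)) volume)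
    (hRUint : ∀ x : E d, Integrable (fun y => U y / ‖x - y‖ ^ ((d : ℝ) - 2)) volume)
    (hRVcont : Continuous (fun x : E d => ∫ y, V y / ‖x - y‖ ^ ((d : ℝ) - 2)))
    (hRUcont : Continuous (fun x : E d => ∫ y, U y / ‖x - y‖ ^ ((d : ℝ) - 2)))
    (C1 C2 : ℝ)
    (hEL1 : ∀ᵐ x ∂volume, x ∈ Ω₁ →
      (m1 / (m1 - 1)) * U x ^ (m1 - 1)
        - cD d * (∫ y, V y / ‖x - y‖ ^ ((d : ℝ) - 2)) = C1)
    (hEL2 : ∀ᵐ x ∂volume, x ∈ Ω₂ →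
      (m2 / (m2 - 1)) * V x ^ (m2 - 1)
        - cD d * (∫ y, U y / ‖x - y‖ ^ ((d : ℝ) - 2)) = C2)
    (hPoh : 2 * (d : ℝ) * (∫ x, U x ^ m1) + 2 * (d : ℝ) * (∫ x, V x ^ m2) =
      2 * cD d * ((d : ℝ) - 2) * ∫ x, ∫ y, U x * V y / ‖x - y‖ ^ ((d : ℝ) - 2)) :
    C1 = 0 ∧ C2 = 0 ∧ Ω₁ = Set.univ ∧ Ω₂ = Set.univ := by
  have hd3 : (3:ℝ) ≤ (d:ℝ) := by exact_mod_cast hd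
  have hd0 : (d:ℝ) ≠ 0 := by linarith
  have hcd := cD_pos hd
  have hm1ne : m1 ≠ 0 := by linarith
  have hm2ne : m2 ≠ 0 := by linarith
  have hm1ne' : m1 - 1 ≠ 0 := by intro h; linarith
  have hm2ne' : m2 - 1 ≠ 0 := by intro h; linarith
  -- nonnegativity / positivity of Riesz potentials
  have hRVpos : ∀ x : E d, 0 < ∫ y, V y / ‖x - y‖ ^ ((d:ℝ)-2) :=
    fun x => aux_riesz_pos hd hV0 hΩ₂o hΩ₂c.nonempty hVpos x (hRVint x)
  have hRUpos : ∀ x : E d, 0 < ∫ y, U y / ‖x - y‖ ^ ((d:ℝ)-2) :=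
    fun x => aux_riesz_pos hd hU0 hΩ₁o hΩ₁c.nonempty hUpos x (hRUint x)
  -- everywhere Euler-Lagrange on the supports
  have hF1c : Continuous fun x : E d =>
      (m1/(m1-1)) * U x ^ (m1-1) - cD d * ∫ y, V y / ‖x - y‖ ^ ((d:ℝ)-2) :=
    ((continuous_const.mul (hUc.rpow_const (fun x => Or.inr (by linarith)))).sub
      (continuous_const.mul hRVcont))
  have hF2c : Continuous fun x : E d =>
      (m2/(m2-1)) * V x ^ (m2-1) - cD d * ∫ y, U y / ‖x - y‖ ^ ((d:ℝ)-2) :=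
    ((continuous_const.mul (hVc.rpow_const (fun x => Or.inr (by linarith)))).sub
      (continuous_const.mul hRUcont))
  have hEL1' : ∀ x ∈ Ω₁,
      (m1/(m1-1)) * U x ^ (m1-1) - cD d * (∫ y, V y / ‖x - y‖ ^ ((d:ℝ)-2)) = C1 :=
    aux_eq_on_open hΩ₁o hF1c hEL1
  have hEL2' : ∀ x ∈ Ω₂,
      (m2/(m2-1)) * V x ^ (m2-1) - cD d * (∫ y, U y / ‖x - y‖ ^ ((d:ℝ)-2)) = C2 :=
    aux_eq_on_open hΩ₂o hF2c hEL2
  -- integrability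
  have hU1' : Integrable U volume := memLp_one_iff_integrable.mp hU1
  have hV1' : Integrable V volume := memLp_one_iff_integrable.mp hV1
  have hUm' : Integrable (fun x => U x ^ m1) volume := by
    have h := hUm.norm_rpow (by simp [ENNReal.ofReal_eq_zero]; linarith) ENNReal.ofReal_ne_top
    simp only [ENNReal.toReal_ofReal (show (0:ℝ) ≤ m1 by linarith)] at h
    have heq : (fun x => ‖U x‖ ^ m1) = fun x => U x ^ m1 :=
      funext fun x => by rw [Real.norm_of_nonneg (hU0 x)]
    rw [heq] at h
    exact memLp_one_iff_integrable.mp h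
  have hVm' : Integrable (fun x => V x ^ m2) volume := by
    have h := hVm.norm_rpow (by simp [ENNReal.ofReal_eq_zero]; linarith) ENNReal.ofReal_ne_top
    simp only [ENNReal.toReal_ofReal (show (0:ℝ) ≤ m2 by linarith)] at h
    have heq : (fun x => ‖V x‖ ^ m2) = fun x => V x ^ m2 :=
      funext fun x => by rw [Real.norm_of_nonneg (hV0 x)]
    rw [heq] at h
    exact memLp_one_iff_integrable.mp h
  -- integrated identities
  obtain ⟨hIUR, hA⟩ := aux_int_identity hd hm1 hU0 hUzero hU1' hUm' hEL1'
  obtain ⟨hIVR, hB⟩ := aux_int_identity hd hm2 hV0 hVzero hV1' hVm' hEL2'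
  rw [hM1] at hA
  rw [hM2] at hB
  -- the interaction integral
  set a := ∫ x, U x ^ m1 with ha
  set b := ∫ x, V x ^ m2 with hb
  set J := ∫ x, U x * ∫ y, V y / ‖x - y‖ ^ ((d:ℝ)-2) with hJ
  have hswap := aux_swap hUc hVc hU0 hV0 hRVint hIUR
  have hJeq : (∫ x, ∫ y, U x * V y / ‖x - y‖ ^ ((d:ℝ)-2)) = J := by
    rw [hJ]
    congr 1
    funext x
    rw [← integral_const_mul]
    congr 1
    funext y
    rw [mul_div_assoc]
  have hB' : cD d * J = (m2/(m2-1)) * b - C2 * M2 := by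
    rw [← hJeq, hswap] at *
    exact hB
  have hA' : cD d * J = (m1/(m1-1)) * a - C1 * M1 := hA
  have hPohJ : 2*(d:ℝ)*a + 2*(d:ℝ)*b = 2*cD d*((d:ℝ)-2)*J := by
    rw [← hJeq]; linarith [hPoh]
  -- algebra
  have e1 : (m1-1)/m1 + (m2-1)/m2 = ((d:ℝ)-2)/(d:ℝ) := by
    have h2 : (m1-1)/m1 = 1 - 1/m1 := by field_simp
    have h3 : (m2-1)/m2 = 1 - 1/m2 := by field_simp
    have h4 : ((d:ℝ)-2)/(d:ℝ) = 2 - ((d:ℝ)+2)/(d:ℝ) := by field_simp; ring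
    rw [h2, h3, h4, ← hcrit]; ring
  have hA2 : ((m1-1)/m1) * (cD d * J) = a - ((m1-1)/m1) * (C1 * M1) := by
    rw [hA']; field_simp
  have hB2 : ((m2-1)/m2) * (cD d * J) = b - ((m2-1)/m2) * (C2 * M2) := by
    rw [hB']; field_simp
  have hC' : ((m1-1)/m1 + (m2-1)/m2) * (cD d * J) = a + b := by
    rw [e1, div_mul_eq_mul_div, div_eq_iff hd0]
    linear_combination (-(1:ℝ)/2) * hPohJ
  have hkey : ((m1-1)/m1) * (C1*M1) + ((m2-1)/m2) * (C2*M2) = 0 := by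
    linear_combination hA2 + hB2 - hC'
  -- signs
  have hC1le : C1 ≤ 0 ∧ (Ω₁ ≠ Set.univ → C1 < 0) :=
    aux_C_nonpos hd hm1 hΩ₁o hΩ₁c.nonempty hUc hU0 hU1' hUzero hRVcont hRVpos hEL1'
  have hC2le : C2 ≤ 0 ∧ (Ω₂ ≠ Set.univ → C2 < 0) :=
    aux_C_nonpos hd hm2 hΩ₂o hΩ₂c.nonempty hVc hV0 hV1' hVzero hRUcont hRUpos hEL2'
  have t1 : 0 < ((m1-1)/m1) * M1 :=
    mul_pos (div_pos (by linarith) (by linarith)) hM1pos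
  have t2 : 0 < ((m2-1)/m2) * M2 :=
    mul_pos (div_pos (by linarith) (by linarith)) hM2pos
  have k1 : ((m1-1)/m1) * (C1*M1) = C1 * (((m1-1)/m1) * M1) := by ring
  have k2 : ((m2-1)/m2) * (C2*M2) = C2 * (((m2-1)/m2) * M2) := by ring
  rw [k1, k2] at hkey
  have s1 : C1 * (((m1-1)/m1)*M1) ≤ 0 := mul_nonpos_iff.mpr (Or.inr ⟨hC1le.1, t1.le⟩)
  have s2 : C2 * (((m2-1)/m2)*M2) ≤ 0 := mul_nonpos_iff.mpr (Or.inr ⟨hC2le.1, t2.le⟩)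
  have z1 : C1 * (((m1-1)/m1)*M1) = 0 := by linarith
  have z2 : C2 * (((m2-1)/m2)*M2) = 0 := by linarith
  have hC1z : C1 = 0 := by
    rcases mul_eq_zero.mp z1 with h | h
    · exact h
    · exact absurd h t1.ne'
  have hC2z : C2 = 0 := by
    rcases mul_eq_zero.mp z2 with h | h
    · exact h
    · exact absurd h t2.ne'
  refine ⟨hC1z, hC2z, ?_, ?_⟩
  · by_contra h
    exact absurd hC1z (hC1le.2 h).ne
  · by_contra h
    exact absurd hC2z (hC2le.2 h).ne
end
end

section
/- Let d ≥ 3 and m1, m2 > 1 with 1/m1 + 1/m2 = (d+2)/d, and assume C_* > 0. Suppose U ∈ L^{m1}(ℝ^d) and V ∈ L^{m2}(ℝ^d) are nonnegative, neither a.e. zero, satisfy the stationary Euler–Lagrange equations, and achieve the sharp Hardy–Littlewood–Sobolev constant: h(U,V) = C_* ‖U‖_{m1} ‖V‖_{m2}. Then ‖U‖_{m1}^{m1} = x_* and ‖V‖_{m2}^{m2} = y_* = A·x_*, and moreover F(U,V) = g(x_*, y_*). -/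
open MeasureTheory Real

noncomputable section

/-- The real `L^p` norm on `ℝ^d`. -/
def lpNorm (d : ℕ) (p : ℝ) (u : E d → ℝ) : ℝ :=
  (eLpNorm u (ENNReal.ofReal p) volume).toReal

/-- The functional `J(u,v) = h(u,v) / (‖u‖_{m1} ‖v‖_{m2})`. -/
def Jfun (d : ℕ) (m1 m2 : ℝ) (u v : E d → ℝ) : ℝ :=
  hInt d u v / (lpNorm d m1 u * lpNorm d m2 v)

/-- The set of values of `J` over admissible pairs. -/
def Jvalues (d : ℕ) (m1 m2 : ℝ) : Set ℝ :=
  {c : ℝ | ∃ u v : E d → ℝ, (∀ x, 0 ≤ u x) ∧ (∀ x, 0 ≤ v x) ∧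
    MemLp u (ENNReal.ofReal m1) volume ∧ MemLp v (ENNReal.ofReal m2) volume ∧
    0 < lpNorm d m1 u ∧ 0 < lpNorm d m2 v ∧ c = Jfun d m1 m2 u v}

/-- The sharp constant `C_*`, the supremum of `J` over admissible pairs. -/
def Cstar (d : ℕ) (m1 m2 : ℝ) : ℝ := sSup (Jvalues d m1 m2)


/-- `A = m1 (m2-1) / (m2 (m1-1))`. -/
def Aconst (m1 m2 : ℝ) : ℝ := m1 * (m2 - 1) / (m2 * (m1 - 1))

/-- `x_* = (m1 A^{-1/m2} / (c_d C_* (m1-1)))^{1/(1/m1+1/m2-1)}`. -/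
def xStar (d : ℕ) (m1 m2 : ℝ) : ℝ :=
  (m1 * Aconst m1 m2 ^ (-(1 / m2)) / (cD d * Cstar d m1 m2 * (m1 - 1)))
    ^ (1 / (1 / m1 + 1 / m2 - 1))

/-- `y_* = A x_*`. -/
def yStar (d : ℕ) (m1 m2 : ℝ) : ℝ := Aconst m1 m2 * xStar d m1 m2

/-- The auxiliary function `g(x,y) = x/(m1-1) + y/(m2-1) - c_d C_* x^{1/m1} y^{1/m2}`. -/
def gAux (d : ℕ) (m1 m2 : ℝ) (x y : ℝ) : ℝ :=
  x / (m1 - 1) + y / (m2 - 1) - cD d * Cstar d m1 m2 * x ^ (1 / m1) * y ^ (1 / m2)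


lemma lpNorm_eq {d : ℕ} {p : ℝ} (hp : 0 < p) {u : E d → ℝ} (hu0 : ∀ x, 0 ≤ u x)
    (hum : MemLp u (ENNReal.ofReal p) volume) :
    lpNorm d p u = (∫ x, u x ^ p) ^ (1/p) := by
  unfold _root_.lpNorm
  rw [hum.eLpNorm_eq_integral_rpow_norm (by simp [hp.not_ge]) (by simp)]
  rw [ENNReal.toReal_ofReal]
  · congr 1
    · refine integral_congr_ae (Filter.Eventually.of_forall fun x => ?_)
      dsimp only
      rw [Real.norm_of_nonneg (hu0 x), ENNReal.toReal_ofReal hp.le]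
    · rw [ENNReal.toReal_ofReal hp.le, one_div]
  · apply Real.rpow_nonneg
    exact integral_nonneg fun x => Real.rpow_nonneg (norm_nonneg _) _

lemma lpNorm_rpow {d : ℕ} {p : ℝ} (hp : 0 < p) {u : E d → ℝ} (hu0 : ∀ x, 0 ≤ u x)
    (hum : MemLp u (ENNReal.ofReal p) volume) :
    lpNorm d p u ^ p = ∫ x, u x ^ p := by
  rw [lpNorm_eq hp hu0 hum, ← Real.rpow_mul
    (integral_nonneg fun x => Real.rpow_nonneg (hu0 x) _),
    one_div, inv_mul_cancel₀ hp.ne', Real.rpow_one]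

lemma integral_rpow_pos {d : ℕ} {p : ℝ} (hp : 0 < p) {u : E d → ℝ} (hu0 : ∀ x, 0 ≤ u x)
    (hum : MemLp u (ENNReal.ofReal p) volume)
    (hune : ¬ (u =ᵐ[volume] (fun _ => (0 : ℝ)))) :
    0 < ∫ x, u x ^ p := by
  rw [← lpNorm_rpow hp hu0 hum]
  apply Real.rpow_pos_of_pos
  unfold _root_.lpNorm
  refine ENNReal.toReal_pos ?_ hum.eLpNorm_ne_top
  rw [Ne, eLpNorm_eq_zero_iff hum.1 (by simp [hp.not_ge])]
  exact hune

lemma integrable_rpow_self {d : ℕ} {p : ℝ} (hp : 0 < p) {u : E d → ℝ} (hu0 : ∀ x, 0 ≤ u x)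
    (hum : MemLp u (ENNReal.ofReal p) volume) :
    Integrable (fun x => u x ^ p) volume := by
  have h := hum.integrable_norm_rpow (by simp [hp.not_ge]) (by simp)
  refine h.congr (Filter.Eventually.of_forall fun x => ?_)
  dsimp only
  rw [Real.norm_of_nonneg (hu0 x), ENNReal.toReal_ofReal hp.le]


theorem stmt_15 (d : ℕ) (hd : 3 ≤ d) (m1 m2 : ℝ) (hm1 : 1 < m1) (hm2 : 1 < m2)
    (hcrit : 1 / m1 + 1 / m2 = ((d : ℝ) + 2) / d)
    (hC : 0 < Cstar d m1 m2)
    (U V : E d → ℝ) (hU0 : ∀ x, 0 ≤ U x) (hV0 : ∀ x, 0 ≤ V x)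
    (hUm : MemLp U (ENNReal.ofReal m1) volume)
    (hVm : MemLp V (ENNReal.ofReal m2) volume)
    (hUne : ¬ (U =ᵐ[volume] (fun _ => (0 : ℝ))))
    (hVne : ¬ (V =ᵐ[volume] (fun _ => (0 : ℝ))))
    (hEL : StationaryEL d m1 m2 U V)
    (hopt : hInt d U V = Cstar d m1 m2 * lpNorm d m1 U * lpNorm d m2 V) :
    lpNorm d m1 U ^ m1 = xStar d m1 m2 ∧
    lpNorm d m2 V ^ m2 = yStar d m1 m2 ∧
    yStar d m1 m2 = Aconst m1 m2 * xStar d m1 m2 ∧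
    freeEnergy d m1 m2 U V = gAux d m1 m2 (xStar d m1 m2) (yStar d m1 m2) := by
  obtain ⟨hEL1, hEL2⟩ := hEL
  have hm1' : (0:ℝ) < m1 - 1 := by linarith
  have hm2' : (0:ℝ) < m2 - 1 := by linarith
  have hm1p : (0:ℝ) < m1 := by linarith
  have hm2p : (0:ℝ) < m2 := by linarith
  have hcd : 0 < cD d := cD_pos hd
  have hdR : (3:ℝ) ≤ (d:ℝ) := by exact_mod_cast hd
  have hd2 : (0:ℝ) ≤ (d:ℝ) - 2 := by linarith
  set a := ∫ x, U x ^ m1 with ha_def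
  set b := ∫ x, V x ^ m2 with hb_def
  have hUa : lpNorm d m1 U = a ^ (1/m1) := lpNorm_eq hm1p hU0 hUm
  have hVb : lpNorm d m2 V = b ^ (1/m2) := lpNorm_eq hm2p hV0 hVm
  have hUa' : lpNorm d m1 U ^ m1 = a := lpNorm_rpow hm1p hU0 hUm
  have hVb' : lpNorm d m2 V ^ m2 = b := lpNorm_rpow hm2p hV0 hVm
  have ha : 0 < a := integral_rpow_pos hm1p hU0 hUm hUne
  have hb : 0 < b := integral_rpow_pos hm2p hV0 hVm hVne
  have hpowU : ∀ x : E d, U x ^ (m1 - 1) * U x = U x ^ m1 := by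
    intro x
    have h := Real.rpow_add_of_nonneg (hU0 x) (by linarith : (0:ℝ) ≤ m1 - 1) zero_le_one
    rw [show m1 - 1 + 1 = m1 by ring] at h
    rw [h, Real.rpow_one]
  have hpowV : ∀ x : E d, V x ^ (m2 - 1) * V x = V x ^ m2 := by
    intro x
    have h := Real.rpow_add_of_nonneg (hV0 x) (by linarith : (0:ℝ) ≤ m2 - 1) zero_le_one
    rw [show m2 - 1 + 1 = m2 by ring] at h
    rw [h, Real.rpow_one]
  have key1 : ∀ᵐ x ∂(volume : Measure (E d)),
      (∫ y, U x * V y / ‖x - y‖ ^ ((d:ℝ) - 2)) = m1 / (m1-1) / cD d * U x ^ m1 := by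
    filter_upwards [hEL1] with x hx
    have hI : (∫ y, V y / ‖x - y‖ ^ ((d:ℝ) - 2))
        = (m1 / (m1-1)) * U x ^ (m1-1) / cD d := by
      rw [eq_div_iff hcd.ne', mul_comm, ← hx]
    calc (∫ y, U x * V y / ‖x - y‖ ^ ((d:ℝ) - 2))
        = U x * ∫ y, V y / ‖x - y‖ ^ ((d:ℝ) - 2) := by
          simp_rw [mul_div_assoc]; exact integral_const_mul _ _
      _ = m1 / (m1-1) / cD d * (U x ^ (m1-1) * U x) := by rw [hI]; ring
      _ = m1 / (m1-1) / cD d * U x ^ m1 := by rw [hpowU x]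
  have hInt1 : hInt d U V = m1 / (m1-1) / cD d * a := by
    rw [hInt, integral_congr_ae key1, integral_const_mul]
  have hFm : AEStronglyMeasurable
      (fun p : E d × E d => U p.1 * V p.2 / ‖p.1 - p.2‖ ^ ((d:ℝ) - 2))
      ((volume : Measure (E d)).prod volume) := by
    have h1 : (fun p : E d × E d => U p.1 * V p.2 / ‖p.1 - p.2‖ ^ ((d:ℝ) - 2))
        = fun p : E d × E d => (U p.1 * V p.2) * (‖p.1 - p.2‖ ^ ((d:ℝ) - 2))⁻¹ := by
      funext p; rw [div_eq_mul_inv]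
    rw [h1]
    exact (hUm.1.comp_fst.mul hVm.1.comp_snd).mul
      (((continuous_fst.sub continuous_snd).norm.rpow_const
        (fun x => Or.inr hd2)).measurable.inv.aestronglyMeasurable)
  have hUm1int : Integrable (fun x => U x ^ m1) volume := integrable_rpow_self hm1p hU0 hUm
  have hFint : Integrable
      (fun p : E d × E d => U p.1 * V p.2 / ‖p.1 - p.2‖ ^ ((d:ℝ) - 2))
      ((volume : Measure (E d)).prod volume) := by
    rw [integrable_prod_iff hFm]
    constructor
    · filter_upwards [hEL1] with x hx
      rcases eq_or_lt_of_le (hU0 x) with h0 | h0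
      · have hz : (fun y : E d => U x * V y / ‖x - y‖ ^ ((d:ℝ) - 2)) = fun _ => 0 := by
          funext y; rw [← h0]; ring
        simpa [hz] using integrable_const (0:ℝ)
      · have hIpos : 0 < ∫ y, V y / ‖x - y‖ ^ ((d:ℝ) - 2) := by
          have hrhs : 0 < (m1/(m1-1)) * U x ^ (m1-1) :=
            mul_pos (div_pos hm1p hm1') (Real.rpow_pos_of_pos h0 _)
          rw [hx] at hrhs
          by_contra hne
          push_neg at hne
          nlinarith [hrhs, hcd, hne]
        have hint : Integrable (fun y => V y / ‖x - y‖ ^ ((d:ℝ) - 2)) volume := by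
          by_contra hcon
          rw [integral_undef hcon] at hIpos
          exact lt_irrefl 0 hIpos
        have h2 := hint.const_mul (U x)
        refine h2.congr (Filter.Eventually.of_forall fun y => ?_)
        dsimp only; ring
    · have hcong : (fun x => ∫ y, ‖U x * V y / ‖x - y‖ ^ ((d:ℝ) - 2)‖)
          =ᵐ[volume] fun x => m1 / (m1-1) / cD d * U x ^ m1 := by
        filter_upwards [key1] with x hx
        rw [← hx]
        refine integral_congr_ae (Filter.Eventually.of_forall fun y => ?_)
        exact Real.norm_of_nonneg (div_nonneg (mul_nonneg (hU0 _) (hV0 _))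
          (Real.rpow_nonneg (norm_nonneg _) _))
      exact (hUm1int.const_mul _).congr hcong.symm
  have hswap : hInt d U V = ∫ y, ∫ x, U x * V y / ‖x - y‖ ^ ((d:ℝ) - 2) := by
    rw [hInt]
    exact integral_integral_swap hFint
  have key2 : ∀ᵐ y ∂(volume : Measure (E d)),
      (∫ x, U x * V y / ‖x - y‖ ^ ((d:ℝ) - 2)) = m2 / (m2-1) / cD d * V y ^ m2 := by
    filter_upwards [hEL2] with y hy
    have hI : (∫ x, U x / ‖y - x‖ ^ ((d:ℝ) - 2))
        = (m2 / (m2-1)) * V y ^ (m2-1) / cD d := by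
      rw [eq_div_iff hcd.ne', mul_comm, ← hy]
    calc (∫ x, U x * V y / ‖x - y‖ ^ ((d:ℝ) - 2))
        = V y * ∫ x, U x / ‖y - x‖ ^ ((d:ℝ) - 2) := by
          rw [← integral_const_mul]
          refine integral_congr_ae (Filter.Eventually.of_forall fun x => ?_)
          dsimp only
          rw [norm_sub_rev x y]; ring
      _ = m2 / (m2-1) / cD d * (V y ^ (m2-1) * V y) := by rw [hI]; ring
      _ = m2 / (m2-1) / cD d * V y ^ m2 := by rw [hpowV y]
  have hInt2 : hInt d U V = m2 / (m2-1) / cD d * b := by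
    rw [hswap, integral_congr_ae key2, integral_const_mul]
  have hApos : 0 < Aconst m1 m2 := by
    unfold Aconst
    exact div_pos (mul_pos hm1p hm2') (mul_pos hm2p hm1')
  have hab : b = Aconst m1 m2 * a := by
    have h := hInt1.symm.trans hInt2
    unfold Aconst
    field_simp [hcd.ne', hm1'.ne', hm2'.ne', hm1p.ne', hm2p.ne'] at h ⊢
    have h' : m1 * a * (m2 - 1) = m2 * b * (m1 - 1) := by
      apply mul_right_cancel₀ hcd.ne'
      linear_combination (cD d) * h
    linear_combination -h'

  have hdpos : (0:ℝ) < (d:ℝ) := by linarith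
  set s := 1 / m1 + 1 / m2 - 1 with hs_def
  have hs : 0 < s := by
    rw [hs_def, hcrit]
    rw [sub_pos, lt_div_iff₀ hdpos]
    linarith
  have hApow : 0 < Aconst m1 m2 ^ (1/m2) := Real.rpow_pos_of_pos hApos _
  have hmain : m1 / (m1-1) / cD d * a
      = Cstar d m1 m2 * Aconst m1 m2 ^ (1/m2) * a ^ s * a := by
    have hps : a ^ s * a = a ^ (1/m1) * a ^ (1/m2) := by
      calc a ^ s * a = a ^ s * a ^ (1:ℝ) := by rw [Real.rpow_one]
        _ = a ^ (s + 1) := (Real.rpow_add ha _ _).symm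
        _ = a ^ (1/m1 + 1/m2) := by rw [hs_def]; congr 1; ring
        _ = a ^ (1/m1) * a ^ (1/m2) := Real.rpow_add ha _ _
    rw [← hInt1, hopt, hUa, hVb, hab, Real.mul_rpow hApos.le ha.le]
    calc Cstar d m1 m2 * a ^ (1/m1) * (Aconst m1 m2 ^ (1/m2) * a ^ (1/m2))
        = Cstar d m1 m2 * Aconst m1 m2 ^ (1/m2) * (a ^ (1/m1) * a ^ (1/m2)) := by ring
      _ = Cstar d m1 m2 * Aconst m1 m2 ^ (1/m2) * (a ^ s * a) := by rw [← hps]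
      _ = Cstar d m1 m2 * Aconst m1 m2 ^ (1/m2) * a ^ s * a := by ring
  have h2 : m1 / (m1-1) / cD d = Cstar d m1 m2 * Aconst m1 m2 ^ (1/m2) * a ^ s :=
    mul_right_cancel₀ ha.ne' hmain
  have hstep : a ^ s = m1 * Aconst m1 m2 ^ (-(1 / m2))
      / (cD d * Cstar d m1 m2 * (m1 - 1)) := by
    rw [Real.rpow_neg hApos.le]
    have hApne : Aconst m1 m2 ^ (1/m2) ≠ 0 := hApow.ne'
    field_simp [hcd.ne', hC.ne', hm1'.ne', hApne] at h2 ⊢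
    linear_combination -h2
  have haxs : a = xStar d m1 m2 := by
    rw [xStar, ← hs_def, ← hstep, ← Real.rpow_mul ha.le,
      mul_one_div_cancel hs.ne', Real.rpow_one]
  have hbys : b = yStar d m1 m2 := by
    rw [yStar, hab, haxs]
  refine ⟨by rw [hUa', haxs], by rw [hVb', hbys], rfl, ?_⟩
  rw [freeEnergy, gAux, hopt, hUa, hVb, ← ha_def, ← hb_def, ← haxs, ← hbys]
  ring
end
end
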